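/- arXiv:2306.00727 — 2 statements merged into one kernel-verified Lean document; each statement's English description precedes it below -/
import Mathlib

section
/- Let FS(Z) be the space of generalized geodesics of a metric space Z with the metric d_FS(c,c') = ∫_ℝ d_Z(c(t),c'(t)) / (2 e^{|t|}) dt, and let Φ_τ(c)(t) = c(t+τ) be the flow. Then for all generalized geodesics c, d and all real τ, σ one has d_FS(Φ_τ(c), Φ_σ(d)) ≤ e^{|τ|} · d_FS(c,d) + |σ − τ|. -/
open MeasureTheory

/-- A generalized geodesic in a metric space `Z`. -/
def IsGenGeodesic {Z : Type*} [MetricSpace Z] (c : ℝ → Z) : Prop :=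
  Continuous c ∧
  ∃ I : Set ℝ,
    ((∃ a b : ℝ, a ≤ b ∧ I = Set.Icc a b) ∨ (∃ a : ℝ, I = Set.Ici a) ∨
      (∃ b : ℝ, I = Set.Iic b) ∨ I = Set.univ) ∧
    (∀ s ∈ I, ∀ t ∈ I, dist (c s) (c t) = |s - t|) ∧
    (∀ t ∉ I, ∃ ε > 0, ∀ s : ℝ, |s - t| < ε → c s = c t)

/-- The distance on the space of generalized geodesics. -/
noncomputable def dFS {Z : Type*} [MetricSpace Z] (c c' : ℝ → Z) : ℝ :=
  ∫ t : ℝ, dist (c t) (c' t) / (2 * Real.exp |t|)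

/-- The flow on the space of generalized geodesics. -/
def flowFS {Z : Type*} [MetricSpace Z] (c : ℝ → Z) (τ : ℝ) : ℝ → Z := fun t => c (t + τ)

/-! Generalized geodesics are 1-Lipschitz: they are isometric on the closed set `I`, and across
each gap of `I` they are locally constant, hence constant. So all the integrands that occur are
integrable against the weight `1 / (2 e^{|t|})`, whose total mass is one. By the triangle inequality
`d_FS(Φ_τ c, Φ_σ d) ≤ d_FS(Φ_τ c, Φ_τ d) + d_FS(Φ_τ d, Φ_σ d)`; the second term is at most
`|σ - τ|` because `d` is 1-Lipschitz, and substituting `u = t + τ` in the first one replaces the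
weight by `1 / (2 e^{|u - τ|}) ≤ e^{|τ|} / (2 e^{|u|})`. -/

open Real Set Filter Topology

theorem integrable_exp_neg_mul_abs {b : ℝ} (hb : 0 < b) :
    Integrable fun t : ℝ => exp (-b * |t|) := by
  refine (by fun_prop : Continuous fun t : ℝ => exp (-b * |t|)).locallyIntegrable
    |>.integrable_of_isBigO_atTop_of_norm_isNegInvariant (.of_forall fun t => ?_) ?_
      ⟨Ioi 0, Ioi_mem_atTop 0, exp_neg_integrableOn_Ioi 0 hb⟩
  · simp [abs_neg]
  · exact EventuallyEq.isBigO <| (eventually_ge_atTop 0).mono fun t ht => by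
      simp [abs_of_nonneg ht]

theorem integrable_div_two_mul_exp_abs {f : ℝ → ℝ} (hf : AEStronglyMeasurable f) {A B : ℝ}
    (hbound : ∀ t, ‖f t‖ ≤ A + B * |t|) : Integrable fun t => f t / (2 * exp |t|) := by
  refine ((integrable_exp_neg_mul_abs one_half_pos).const_mul ((|A| + 2 * |B|) / 2)).mono'
    (hf.div₀ (by fun_prop)) (.of_forall fun t => ?_)
  have hx : 0 ≤ |t| := abs_nonneg t
  have hlin : |t| ≤ 2 * exp (|t| / 2) := by linarith [add_one_le_exp (|t| / 2)]
  have hone : 1 ≤ exp (|t| / 2) := one_le_exp (by positivity)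
  have hexp : exp (-(1 / 2) * |t|) * exp |t| = exp (|t| / 2) := by rw [← exp_add]; ring_nf
  rw [norm_div, Real.norm_of_nonneg (by positivity : (0 : ℝ) ≤ 2 * exp |t|),
    div_le_iff₀ (by positivity)]
  calc ‖f t‖ ≤ A + B * |t| := hbound t
    _ ≤ |A| + |B| * |t| :=
      add_le_add (le_abs_self A) (mul_le_mul_of_nonneg_right (le_abs_self B) hx)
    _ ≤ (|A| + 2 * |B|) * exp (|t| / 2) := by nlinarith [abs_nonneg A, abs_nonneg B]
    _ = (|A| + 2 * |B|) / 2 * exp (-(1 / 2) * |t|) * (2 * exp |t|) := by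
      rw [← hexp]; ring

theorem integral_div_two_mul_exp_abs (C : ℝ) : ∫ t, C / (2 * exp |t|) = C := by
  have h : ∀ x, C / (2 * exp x) = C / 2 * exp (-x) := fun x => by
    rw [exp_neg]; field_simp
  rw [integral_comp_abs (f := fun x => C / (2 * exp x))]
  simp only [h, integral_const_mul, integral_exp_neg_Ioi_zero]
  ring

section GeneralizedGeodesic

variable {Z : Type*} [MetricSpace Z]

theorem eq_of_eventually_eq_on_Ioo {f : ℝ → Z} (hf : Continuous f) {x y : ℝ} (hxy : x ≤ y)
    (hloc : ∀ u ∈ Ioo x y, ∀ᶠ v in 𝓝 u, f v = f u) : f x = f y := by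
  rcases hxy.eq_or_lt with rfl | hlt
  · rfl
  have hconst : IsLocallyConstant fun u : Ioo x y => f u :=
    (IsLocallyConstant.iff_eventually_eq _).2 fun u =>
      (continuous_subtype_val.tendsto u).eventually (hloc u u.2)
  have : PreconnectedSpace (Ioo x y) := isPreconnected_iff_preconnectedSpace.1 isPreconnected_Ioo
  set m : Ioo x y := ⟨(x + y) / 2, by constructor <;> linarith⟩
  have hIoo : Ioo x y ⊆ {u | f u = f m} := fun u hu =>
    hconst.apply_eq_of_preconnectedSpace ⟨u, hu⟩ m
  have hIcc : Icc x y ⊆ {u | f u = f m} := by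
    rw [← closure_Ioo hlt.ne]
    exact (isClosed_eq hf continuous_const).closure_subset_iff.2 hIoo
  exact (hIcc (left_mem_Icc.2 hxy)).trans (hIcc (right_mem_Icc.2 hxy)).symm

theorem lipschitzWith_one_of_isometry_on_of_eventually_eq {c : ℝ → Z} (hc : Continuous c)
    {I : Set ℝ} (hI : IsClosed I) (hiso : ∀ s ∈ I, ∀ t ∈ I, dist (c s) (c t) = |s - t|)
    (hloc : ∀ t ∉ I, ∀ᶠ v in 𝓝 t, c v = c t) : LipschitzWith 1 c := by
  have key : ∀ s t, s ≤ t → dist (c s) (c t) ≤ t - s := by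
    intro s t hst
    set J := I ∩ Icc s t
    rcases J.eq_empty_or_nonempty with hJ | hJ
    · rw [eq_of_eventually_eq_on_Ioo hc hst fun u hu => hloc u fun huI =>
        hJ.subset ⟨huI, Ioo_subset_Icc_self hu⟩, dist_self]
      linarith
    have hJc : IsClosed J := hI.inter isClosed_Icc
    have hJb : BddBelow J := bddBelow_Icc.mono inter_subset_right
    have hJa : BddAbove J := bddAbove_Icc.mono inter_subset_right
    obtain ⟨hpI, hsp, hpt⟩ := hJc.csInf_mem hJ hJb
    obtain ⟨hqI, hsq, hqt⟩ := hJc.csSup_mem hJ hJa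
    have hcp : c s = c (sInf J) := eq_of_eventually_eq_on_Ioo hc hsp fun u hu => hloc u
      fun huI => (csInf_le hJb ⟨huI, hu.1.le, hu.2.le.trans hpt⟩).not_gt hu.2
    have hcq : c (sSup J) = c t := eq_of_eventually_eq_on_Ioo hc hqt fun u hu => hloc u
      fun huI => (le_csSup hJa ⟨huI, hsq.trans hu.1.le, hu.2.le⟩).not_gt hu.1
    have hpq : sInf J ≤ sSup J := csInf_le hJb ⟨hqI, hsq, hqt⟩
    rw [hcp, ← hcq, hiso _ hpI _ hqI, abs_sub_comm, abs_of_nonneg (sub_nonneg.2 hpq)]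
    linarith
  refine LipschitzWith.of_dist_le_mul fun s t => ?_
  rw [NNReal.coe_one, one_mul, Real.dist_eq]
  rcases le_total s t with hst | hts
  · rw [abs_sub_comm, abs_of_nonneg (sub_nonneg.2 hst)]; exact key s t hst
  · rw [dist_comm, abs_of_nonneg (sub_nonneg.2 hts)]; exact key t s hts

theorem IsGenGeodesic.lipschitzWith_one {c : ℝ → Z} (h : IsGenGeodesic c) :
    LipschitzWith 1 c := by
  obtain ⟨hc, I, hshape, hiso, hloc⟩ := h
  refine lipschitzWith_one_of_isometry_on_of_eventually_eq hc ?_ hiso fun t ht => ?_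
  · rcases hshape with ⟨a, b, -, rfl⟩ | ⟨a, rfl⟩ | ⟨b, rfl⟩ | rfl
    exacts [isClosed_Icc, isClosed_Ici, isClosed_Iic, isClosed_univ]
  · obtain ⟨ε, hε, hconst⟩ := hloc t ht
    exact Metric.eventually_nhds_iff.2 ⟨ε, hε, fun v hv => hconst v (Real.dist_eq v t ▸ hv)⟩

theorem LipschitzWith.flowFS {K : NNReal} {c : ℝ → Z} (hc : LipschitzWith K c) (τ : ℝ) :
    LipschitzWith K (flowFS c τ) :=
  mul_one K ▸ hc.comp (isometry_add_right τ).lipschitz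

theorem LipschitzWith.integrable_dist_div_two_mul_exp_abs {K L : NNReal} {f g : ℝ → Z}
    (hf : LipschitzWith K f) (hg : LipschitzWith L g) :
    Integrable fun t => dist (f t) (g t) / (2 * exp |t|) := by
  refine integrable_div_two_mul_exp_abs (hf.continuous.dist hg.continuous).aestronglyMeasurable
    (A := dist (f 0) (g 0)) (B := K + L) fun t => ?_
  have hft := hf.dist_le_mul t 0
  have hgt := hg.dist_le_mul 0 t
  rw [Real.dist_eq, sub_zero] at hft
  rw [Real.dist_eq, zero_sub, abs_neg] at hgt
  rw [Real.norm_of_nonneg dist_nonneg]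
  linarith [dist_triangle4 (f t) (f 0) (g 0) (g t)]

theorem dFS_triangle {f g h : ℝ → Z}
    (hfg : Integrable fun t => dist (f t) (g t) / (2 * exp |t|))
    (hgh : Integrable fun t => dist (g t) (h t) / (2 * exp |t|)) :
    dFS f h ≤ dFS f g + dFS g h := by
  rw [dFS, dFS, dFS, ← integral_add hfg hgh]
  refine integral_mono_of_nonneg (.of_forall fun t => by positivity) (hfg.add hgh)
    (.of_forall fun t => ?_)
  dsimp only
  rw [← add_div]
  gcongr
  exact dist_triangle _ _ _

theorem dFS_le_of_forall_dist_le {f g : ℝ → Z} {C : ℝ} (h : ∀ t, dist (f t) (g t) ≤ C) :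
    dFS f g ≤ C := by
  have hC : Integrable fun t : ℝ => C / (2 * exp |t|) :=
    integrable_div_two_mul_exp_abs aestronglyMeasurable_const (A := |C|) (B := 0)
      fun _ => by simp
  calc dFS f g ≤ ∫ t, C / (2 * exp |t|) :=
        integral_mono_of_nonneg (.of_forall fun t => by positivity) hC
          (.of_forall fun t => div_le_div_of_nonneg_right (h t) (by positivity))
    _ = C := integral_div_two_mul_exp_abs C

theorem dFS_flowFS_le {f g : ℝ → Z} (hfg : Integrable fun t => dist (f t) (g t) / (2 * exp |t|))
    (τ : ℝ) : dFS (flowFS f τ) (flowFS g τ) ≤ exp |τ| * dFS f g := by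
  have hshift : dFS (flowFS f τ) (flowFS g τ) = ∫ u, dist (f u) (g u) / (2 * exp |u - τ|) := by
    rw [← integral_add_right_eq_self _ τ]
    simp only [dFS, flowFS, add_sub_cancel_right]
  rw [hshift, dFS, ← integral_const_mul]
  refine integral_mono_of_nonneg (.of_forall fun u => by positivity) (hfg.const_mul _)
    (.of_forall fun u => ?_)
  have hweight : exp |u| ≤ exp |τ| * exp |u - τ| := by
    rw [← exp_add, exp_le_exp]
    linarith [abs_sub_abs_le_abs_sub u τ]
  calc dist (f u) (g u) / (2 * exp |u - τ|)
      = exp |τ| * dist (f u) (g u) / (2 * (exp |τ| * exp |u - τ|)) := by field_simp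
    _ ≤ exp |τ| * dist (f u) (g u) / (2 * exp |u|) := by gcongr
    _ = exp |τ| * (dist (f u) (g u) / (2 * exp |u|)) := mul_div_assoc _ _ _

end GeneralizedGeodesic

/-- Estimate for the flow: `d_FS(Φ_τ(c), Φ_σ(d)) ≤ e^{|τ|} d_FS(c,d) + |σ − τ|`. -/
theorem flow_estimate {Z : Type*} [MetricSpace Z] (c d : ℝ → Z)
    (hc : IsGenGeodesic c) (hd : IsGenGeodesic d) (τ σ : ℝ) :
    dFS (flowFS c τ) (flowFS d σ) ≤ Real.exp |τ| * dFS c d + |σ - τ| := by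
  have hc₁ := hc.lipschitzWith_one
  have hd₁ := hd.lipschitzWith_one
  have hflow_dist : ∀ t, dist (flowFS d τ t) (flowFS d σ t) ≤ |σ - τ| := fun t => by
    simpa [flowFS, dist_add_left, Real.dist_eq, abs_sub_comm] using
      hd₁.dist_le_mul (t + τ) (t + σ)
  calc dFS (flowFS c τ) (flowFS d σ)
      ≤ dFS (flowFS c τ) (flowFS d τ) + dFS (flowFS d τ) (flowFS d σ) :=
        dFS_triangle ((hc₁.flowFS τ).integrable_dist_div_two_mul_exp_abs (hd₁.flowFS τ))
          ((hd₁.flowFS τ).integrable_dist_div_two_mul_exp_abs (hd₁.flowFS σ))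
    _ ≤ exp |τ| * dFS c d + |σ - τ| :=
        add_le_add (dFS_flowFS_le (hc₁.integrable_dist_div_two_mul_exp_abs hd₁) τ)
          (dFS_le_of_forall_dist_le hflow_dist)
end

section
/- Let G act properly by isometries on a metric space X such that the action on X is smooth and proper, and let FS(X) be the flow space of generalized geodesics with the induced G-action. Suppose c ∈ FS(X) is periodic, i.e., there exist g ∈ G and t > 0 with gc = Φ_t(c) and gc ≠ c for the minimal such data. Then c is a bi-infinite geodesic (nowhere locally constant), and the set Γ_c = {t ∈ ℝ : ∃ v ∈ G, vc = Φ_t(c)} is a nontrivial discrete subgroup of (ℝ,+), hence infinite cyclic, generated by the period τ_c = min(Γ_c ∩ ℝ_{>0}). -/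
/-!
The element `g` moves `c` by an isometry onto its `t₀`-shift, so distances along `c` are
invariant under `s ↦ s + t₀`. If the geodesic interval of `c` had an endpoint, `c` would be
constant beyond it, and shift invariance would spread this constancy over all of `ℝ`,
contradicting `g • c ≠ c`; so `c` is a bi-infinite geodesic, in particular injective.
Properness makes `{h | h • c 0 ∈ c '' [0, t₀]}` compact and open stabilizers make `h ↦ h • c 0`
locally constant, so the orbit of `c 0` meets `c '' [0, t₀]` in finitely many points. Hence the
period group has only finitely many elements in `[0, t₀]`, and its least positive element
generates it.
-/

/-- A continuous map is proper if preimages of compact sets are compact. -/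
def PropMap {X Y : Type*} [TopologicalSpace X] [TopologicalSpace Y] (f : X → Y) : Prop :=
  Continuous f ∧ ∀ K : Set Y, IsCompact K → IsCompact (f ⁻¹' K)

/-- The set of periods of a generalized geodesic: those `t ∈ ℝ` for which some
`v ∈ G` satisfies `v • c = Φ_t(c)`. -/
def periodSet (G : Type*) {X : Type*} [Group G] [MulAction G X] (c : ℝ → X) : Set ℝ :=
  {t : ℝ | ∃ v : G, ∀ s : ℝ, v • c s = c (s + t)}

open Set Filter Topology MulAction Function Pointwise

lemma IsPreconnected.apply_eq_of_eventually_eq {α Z : Type*} [TopologicalSpace α]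
    [TopologicalSpace Z] [T2Space Z] {f : α → Z} (hf : Continuous f) {U : Set α}
    (hU : IsPreconnected U) (hloc : ∀ t ∈ U, ∀ᶠ s in 𝓝 t, f s = f t)
    {x y : α} (hx : x ∈ closure U) (hy : y ∈ closure U) : f x = f y := by
  obtain ⟨u, hu⟩ := closure_nonempty_iff.1 ⟨x, hx⟩
  have : PreconnectedSpace U := Subtype.preconnectedSpace hU
  have hrestrict : IsLocallyConstant fun s : U => f s := (IsLocallyConstant.iff_eventually_eq _).2
    fun t => by rw [nhds_subtype]; exact (hloc t t.2).comap _
  have hU_sub : U ⊆ {s | f s = f u} := fun s hs =>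
    hrestrict.apply_eq_of_preconnectedSpace ⟨s, hs⟩ ⟨u, hu⟩
  have hclosure := closure_minimal hU_sub (isClosed_eq hf continuous_const)
  exact (hclosure hx).trans (hclosure hy).symm

lemma IsCompact.finite_image_of_isLocallyConstant {α β : Type*} [TopologicalSpace α] {s : Set α}
    {f : α → β} (hs : IsCompact s) (hf : IsLocallyConstant f) : (f '' s).Finite := by
  let _ : TopologicalSpace β := ⊥
  have : DiscreteTopology β := ⟨rfl⟩
  exact (hs.image hf.continuous).finite_of_discrete

lemma eq_of_eqOn_Ici_of_dist_add_eq {Z : Type*} [MetricSpace Z] {c : ℝ → Z} {t₀ b : ℝ}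
    (ht₀ : 0 < t₀) (hshift : ∀ s t, dist (c (s + t₀)) (c (t + t₀)) = dist (c s) (c t))
    (hb : ∀ s, b ≤ s → c s = c b) (s : ℝ) : c s = c b := by
  have hstep : ∀ n : ℕ, ∀ s, b - n * t₀ ≤ s → c s = c b := by
    intro n
    induction n with
    | zero => simpa using hb
    | succ n ih =>
      intro s hs
      have hn : (0 : ℝ) ≤ n * t₀ := by positivity
      rw [← dist_le_zero, ← hshift, ih (s + t₀) (by push_cast at hs; linarith),
        ih (b + t₀) (by linarith), dist_self]
  obtain ⟨n, hn⟩ := exists_nat_ge ((b - s) / t₀)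
  exact hstep n s (by rw [div_le_iff₀ ht₀] at hn; linarith)

lemma eq_of_eqOn_Iic_of_dist_add_eq {Z : Type*} [MetricSpace Z] {c : ℝ → Z} {t₀ a : ℝ}
    (ht₀ : 0 < t₀) (hshift : ∀ s t, dist (c (s + t₀)) (c (t + t₀)) = dist (c s) (c t))
    (ha : ∀ s, s ≤ a → c s = c a) (s : ℝ) : c s = c a := by
  have hshift_neg : ∀ s t, dist (c (-(s + t₀))) (c (-(t + t₀))) = dist (c (-s)) (c (-t)) := by
    intro s t
    have := hshift (-(s + t₀)) (-(t + t₀))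
    simp only [show ∀ u, -(u + t₀) + t₀ = -u from fun u => by ring] at this
    exact this.symm
  simpa using eq_of_eqOn_Ici_of_dist_add_eq (c := fun s => c (-s)) (b := -a) ht₀ hshift_neg
    (fun s hs => by simpa using ha (-s) (by linarith)) (-s)

theorem IsGenGeodesic.dist_eq_of_dist_add_eq {Z : Type*} [MetricSpace Z] {c : ℝ → Z}
    (hc : IsGenGeodesic c) {t₀ : ℝ} (ht₀ : 0 < t₀)
    (hshift : ∀ s t, dist (c (s + t₀)) (c (t + t₀)) = dist (c s) (c t))
    (hnonconst : ∃ s t, c s ≠ c t) : ∀ s t, dist (c s) (c t) = |s - t| := by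
  obtain ⟨hcont, I, hI, hgeo, hloc⟩ := hc
  obtain ⟨s₁, s₂, hne⟩ := hnonconst
  have hloc' : ∀ t ∉ I, ∀ᶠ s in 𝓝 t, c s = c t := fun t ht => by
    obtain ⟨ε, hε, h⟩ := hloc t ht
    exact Metric.eventually_nhds_iff.2 ⟨ε, hε, fun {s} hs => h s hs⟩
  have no_right_end : ∀ b, (∀ t, b < t → t ∉ I) → False := fun b hb => by
    have hconst : ∀ s, b ≤ s → c s = c b := fun s hs =>
      isPreconnected_Ioi.apply_eq_of_eventually_eq hcont (fun t ht => hloc' t (hb t ht))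
        (by rwa [closure_Ioi]) (by rw [closure_Ioi]; exact self_mem_Ici)
    exact hne ((eq_of_eqOn_Ici_of_dist_add_eq ht₀ hshift hconst s₁).trans
      (eq_of_eqOn_Ici_of_dist_add_eq ht₀ hshift hconst s₂).symm)
  have no_left_end : ∀ a, (∀ t, t < a → t ∉ I) → False := fun a ha => by
    have hconst : ∀ s, s ≤ a → c s = c a := fun s hs =>
      isPreconnected_Iio.apply_eq_of_eventually_eq hcont (fun t ht => hloc' t (ha t ht))
        (by rwa [closure_Iio]) (by rw [closure_Iio]; exact self_mem_Iic)
    exact hne ((eq_of_eqOn_Iic_of_dist_add_eq ht₀ hshift hconst s₁).trans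
      (eq_of_eqOn_Iic_of_dist_add_eq ht₀ hshift hconst s₂).symm)
  rcases hI with ⟨a, b, -, rfl⟩ | ⟨a, rfl⟩ | ⟨b, rfl⟩ | rfl
  · exact (no_right_end b fun t ht h => ht.not_ge h.2).elim
  · exact (no_left_end a fun t ht h => ht.not_ge h).elim
  · exact (no_right_end b fun t ht h => ht.not_ge h).elim
  · exact fun s t => hgeo s trivial t trivial

section ProperSmoothAction

variable {G X : Type*} [Group G] [TopologicalSpace G] [MulAction G X]

lemma isLocallyConstant_smul_of_isOpen_stabilizer [SeparatelyContinuousMul G] {x : X}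
    (hx : IsOpen (stabilizer G x : Set G)) : IsLocallyConstant fun g : G => g • x :=
  (IsLocallyConstant.iff_exists_open _).2 fun g =>
    ⟨g • (stabilizer G x : Set G), hx.leftCoset g, ⟨1, one_mem _, mul_one g⟩, by
      rintro _ ⟨k, hk, rfl⟩
      change (g * k) • x = g • x
      rw [mul_smul, mem_stabilizer_iff.1 hk]⟩

theorem finite_orbit_inter_of_isCompact [SeparatelyContinuousMul G] [TopologicalSpace X]
    (hproper : ∀ K : Set (X × X), IsCompact K →
      IsCompact ((fun p : G × X => (p.2, p.1 • p.2)) ⁻¹' K))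
    {x : X} (hx : IsOpen (stabilizer G x : Set G)) {K : Set X} (hK : IsCompact K) :
    (orbit G x ∩ K).Finite := by
  have hreturn : IsCompact {g : G | g • x ∈ K} := by
    convert (hproper _ ((isCompact_singleton (x := x)).prod hK)).image continuous_fst using 1
    ext g
    simp
  convert hreturn.finite_image_of_isLocallyConstant
    (isLocallyConstant_smul_of_isOpen_stabilizer hx) using 1
  ext y
  constructor
  · rintro ⟨⟨g, rfl⟩, hy⟩
    exact ⟨g, hy, rfl⟩
  · rintro ⟨g, hg, rfl⟩
    exact ⟨mem_orbit x g, hg⟩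

theorem finite_periodSet_inter_Icc [SeparatelyContinuousMul G] [TopologicalSpace X]
    (hproper : ∀ K : Set (X × X), IsCompact K →
      IsCompact ((fun p : G × X => (p.2, p.1 • p.2)) ⁻¹' K))
    {c : ℝ → X} (hsmooth : IsOpen (stabilizer G (c 0) : Set G)) (hcont : Continuous c)
    (hinj : Injective c) (a b : ℝ) : (periodSet G c ∩ Icc a b).Finite := by
  refine Finite.of_finite_image ((finite_orbit_inter_of_isCompact hproper hsmooth
    ((isCompact_Icc (a := a) (b := b)).image hcont)).subset ?_) hinj.injOn
  rintro _ ⟨t, ⟨⟨v, hv⟩, ht⟩, rfl⟩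
  exact ⟨⟨v, by simpa using hv 0⟩, t, ht, rfl⟩

end ProperSmoothAction

def periodAddSubgroup (G : Type*) {X : Type*} [Group G] [MulAction G X] (c : ℝ → X) :
    AddSubgroup ℝ where
  carrier := periodSet G c
  zero_mem' := ⟨1, fun s => by simp⟩
  add_mem' := by
    rintro a b ⟨v, hv⟩ ⟨w, hw⟩
    exact ⟨v * w, fun s => by rw [mul_smul, hw, hv, add_assoc, add_comm b]⟩
  neg_mem' := by
    rintro a ⟨v, hv⟩
    exact ⟨v⁻¹, fun s => by rw [inv_smul_eq_iff, hv, neg_add_cancel_right]⟩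

theorem AddSubgroup.exists_isLeast_pos_of_finite_inter_Icc {S : AddSubgroup ℝ} {t₀ : ℝ}
    (ht₀ : 0 < t₀) (hS : t₀ ∈ S) (hfin : ((S : Set ℝ) ∩ Icc 0 t₀).Finite) :
    ∃ T, 0 < T ∧ IsLeast {t | 0 < t ∧ t ∈ S} T ∧ (S : Set ℝ) = {r | ∃ n : ℤ, r = n * T} := by
  obtain ⟨T, ⟨hTS, hT0, hTt₀⟩, hTmin⟩ := Set.exists_min_image ((S : Set ℝ) ∩ Ioc 0 t₀) id
    (hfin.subset (inter_subset_inter_right _ Ioc_subset_Icc_self)) ⟨t₀, hS, ht₀, le_rfl⟩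
  have hleast : IsLeast {t | 0 < t ∧ t ∈ S} T := ⟨⟨hT0, hTS⟩, fun t ⟨ht0, htS⟩ =>
    (le_or_gt t t₀).elim (fun h => hTmin t ⟨htS, ht0, h⟩) (fun h => hTt₀.trans h.le)⟩
  refine ⟨T, hT0, hleast, ?_⟩
  have hcyc := AddSubgroup.cyclic_of_min (H := S) ⟨⟨hTS, hT0⟩, fun t ht => hleast.2 ⟨ht.2, ht.1⟩⟩
  ext r
  rw [SetLike.mem_coe, hcyc, ← AddSubgroup.zmultiples_eq_closure, AddSubgroup.mem_zmultiples_iff]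
  simp [zsmul_eq_mul, eq_comm]

theorem periodic_geodesic_structure_general {G X : Type*} [Group G] [TopologicalSpace G]
    [IsTopologicalGroup G]
    [MetricSpace X] [MulAction G X]
    (hiso : ∀ g : G, Isometry (fun x : X => g • x))
    (hproper : PropMap fun p : G × X => (p.2, p.1 • p.2))
    (hsmooth : ∀ x : X, IsOpen ((MulAction.stabilizer G x : Set G)))
    (c : ℝ → X) (hc : IsGenGeodesic c)
    (hper : ∃ (g : G) (t : ℝ), 0 < t ∧ (∀ s : ℝ, g • c s = c (s + t)) ∧
      (∃ s : ℝ, g • c s ≠ c s)) :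
    (∀ s t : ℝ, dist (c s) (c t) = |s - t|) ∧
    ∃ T : ℝ, 0 < T ∧ IsLeast {t : ℝ | 0 < t ∧ t ∈ periodSet G c} T ∧
      periodSet G c = {r : ℝ | ∃ n : ℤ, r = n * T} := by
  obtain ⟨g, t₀, ht₀, hg, s, hs⟩ := hper
  have hshift : ∀ s t, dist (c (s + t₀)) (c (t + t₀)) = dist (c s) (c t) := fun s t => by
    rw [← hg, ← hg]
    exact (hiso g).dist_eq _ _
  have hgeo := hc.dist_eq_of_dist_add_eq ht₀ hshift ⟨s + t₀, s, by rwa [← hg]⟩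
  have hinj : Injective c := fun s t hst => by
    simpa [hst, sub_eq_zero, eq_comm] using hgeo s t
  exact ⟨hgeo, AddSubgroup.exists_isLeast_pos_of_finite_inter_Icc (S := periodAddSubgroup G c)
    ht₀ ⟨g, hg⟩ (finite_periodSet_inter_Icc hproper.2 (hsmooth (c 0)) hc.1 hinj 0 t₀)⟩

/-- A periodic generalized geodesic for a proper, smooth, isometric action is a
bi-infinite geodesic, and its set of periods is an infinite cyclic discrete subgroup
of `ℝ` generated by the minimal positive period. -/
theorem periodic_geodesic_structure {G X : Type*} [Group G] [TopologicalSpace G]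
    [IsTopologicalGroup G] [LocallyCompactSpace G] [T2Space G]
    [MetricSpace X] [MulAction G X]
    (hcont : Continuous fun p : G × X => p.1 • p.2)
    (hiso : ∀ g : G, Isometry (fun x : X => g • x))
    (hproper : PropMap fun p : G × X => (p.2, p.1 • p.2))
    (hsmooth : ∀ x : X, IsOpen ((MulAction.stabilizer G x : Set G)))
    (c : ℝ → X) (hc : IsGenGeodesic c)
    (hper : ∃ (g : G) (t : ℝ), 0 < t ∧ (∀ s : ℝ, g • c s = c (s + t)) ∧
      (∃ s : ℝ, g • c s ≠ c s)) :
    (∀ s t : ℝ, dist (c s) (c t) = |s - t|) ∧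
    ∃ T : ℝ, 0 < T ∧ IsLeast {t : ℝ | 0 < t ∧ t ∈ periodSet G c} T ∧
      periodSet G c = {r : ℝ | ∃ n : ℤ, r = n * T} :=
  periodic_geodesic_structure_general hiso hproper hsmooth c hc hper
end
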